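/- Let (N, 𝓜) be a matroid of rank K, let A be a basis with enumeration (a_1, …, a_K), and let i ∈ {1, …, K}. If there exists exactly one element a ∈ N ∖ A^{i−1} with A^{i−1} ∪ {a} ∈ 𝓜, then a belongs to every basis of the matroid. -/

import Mathlib

open Finset

/-- The set `{a 1, …, a i}` of the first `i` elements of the sequence `a`. -/
def initSeg {α : Type*} [DecidableEq α] (a : ℕ → α) (i : ℕ) : Finset α :=
  (Finset.Icc 1 i).image a

section

variable {α : Type*} [DecidableEq α]

theorem initSeg_mono (a : ℕ → α) {j k : ℕ} (h : j ≤ k) : initSeg a j ⊆ initSeg a k :=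
  image_subset_image (Icc_subset_Icc_right h)

theorem card_initSeg_le (a : ℕ → α) (i : ℕ) : (initSeg a i).card ≤ i :=
  card_image_le.trans (by simp)

theorem mem_of_forall_augment_eq {M : Finset α → Prop}
    (hM_aug : ∀ S T : Finset α, M S → M T → S.card < T.card → ∃ x ∈ T \ S, M (insert x S))
    {I B : Finset α} {x : α} (hI : M I) (hB : M B) (hcard : I.card < B.card)
    (huniq : ∀ y ∈ B, y ∉ I → M (insert y I) → y = x) : x ∈ B := by
  obtain ⟨y, hy, hyI⟩ := hM_aug I B hI hB hcard
  obtain ⟨hyB, hy_not⟩ := mem_sdiff.mp hy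
  exact huniq y hyB hy_not hyI ▸ hyB

end

theorem unique_extension_mem_every_basis_general {α : Type*} [DecidableEq α]
    (N : Finset α) (M : Finset α → Prop)
    (hM_ground : ∀ S, M S → S ⊆ N)
    (hM_down : ∀ S T : Finset α, M T → S ⊆ T → M S)
    (hM_aug : ∀ S T : Finset α, M S → M T → S.card < T.card → ∃ x ∈ T \ S, M (insert x S))
    (K : ℕ)
    (A : Finset α) (hA_M : M A)
    (a : ℕ → α)
    (ha_img : (Finset.Icc 1 K).image a = A)
    (i : ℕ) (hi : i ∈ Finset.Icc 1 K)
    (x : α)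
    (huniq : ∀ y ∈ N, y ∉ initSeg a (i - 1) → M (insert y (initSeg a (i - 1))) → y = x) :
    ∀ B : Finset α, M B → B.card = K → x ∈ B := by
  intro B hB hB_card
  obtain ⟨hi_pos, hi_le⟩ := mem_Icc.mp hi
  have hprefix : M (initSeg a (i - 1)) :=
    hM_down _ A hA_M (ha_img ▸ initSeg_mono a (by omega))
  have hprefix_card : (initSeg a (i - 1)).card < B.card :=
    (card_initSeg_le a _).trans_lt (by omega)
  exact mem_of_forall_augment_eq hM_aug hprefix hB hprefix_card
    fun y hyB ↦ huniq y (hM_ground B hB hyB)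

/-- If at step `i` there is exactly one element `x ∈ N ∖ A^{i−1}` with
`A^{i−1} ∪ {x} ∈ 𝓜`, then `x` belongs to every basis. -/
theorem unique_extension_mem_every_basis {α : Type*} [DecidableEq α]
    (N : Finset α) (M : Finset α → Prop)
    (hM_ground : ∀ S, M S → S ⊆ N) (hM_empty : M ∅)
    (hM_down : ∀ S T : Finset α, M T → S ⊆ T → M S)
    (hM_aug : ∀ S T : Finset α, M S → M T → S.card < T.card → ∃ x ∈ T \ S, M (insert x S))
    (K : ℕ) (hK_le : ∀ S, M S → S.card ≤ K) (hK_ex : ∃ B, M B ∧ B.card = K)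
    (A : Finset α) (hA_M : M A) (hA_card : A.card = K)
    (a : ℕ → α) (ha_inj : Set.InjOn a (Set.Icc 1 K))
    (ha_img : (Finset.Icc 1 K).image a = A)
    (i : ℕ) (hi : i ∈ Finset.Icc 1 K)
    (x : α) (hx_N : x ∈ N) (hx_not : x ∉ initSeg a (i - 1))
    (hx_M : M (insert x (initSeg a (i - 1))))
    (huniq : ∀ y ∈ N, y ∉ initSeg a (i - 1) → M (insert y (initSeg a (i - 1))) → y = x) :
    ∀ B : Finset α, M B → B.card = K → x ∈ B :=
  unique_extension_mem_every_basis_general N M hM_ground hM_down hM_aug K A hA_M a ha_img i hi x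
    huniq
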